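/- For N = 2, the set of stationary points of V_γ in Fourier variables y₀ = (x₁+x₂)/2, y₁ = (x₂-x₁)/2 consists of: the origin; (y₀,y₁) = (±1,0) for all γ; (y₀,y₁) = (0, ±√(1-2γ)) if and only if γ < 1/2; and the four points with 8y₀² = 3(1-2γ)-1, 8y₁² = 3-(1-2γ) if and only if γ < 1/3. In particular, for γ > 1/2 there are exactly 3 stationary points, for 1/3 < γ < 1/2 exactly 5, and for 0 < γ < 1/3 exactly 9. -/

import Mathlib

open scoped BigOperators
open Real

/-- The potential for `N = 2`: `V_γ(x₁,x₂) = Σ (x_i⁴/4 - x_i²/2) + (γ/2)(x₁-x₂)²`. -/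
noncomputable def V2 (γ : ℝ) (p : ℝ × ℝ) : ℝ :=
  (p.1 ^ 4 / 4 - p.1 ^ 2 / 2) + (p.2 ^ 4 / 4 - p.2 ^ 2 / 2) + γ / 2 * (p.1 - p.2) ^ 2

/-- The point with Fourier coordinates `(y₀, y₁)`: `x₁ = y₀ - y₁`, `x₂ = y₀ + y₁`. -/
def Fpt (y₀ y₁ : ℝ) : ℝ × ℝ := (y₀ - y₁, y₀ + y₁)

/-- The set of stationary points of `V_γ`. -/
noncomputable def S2 (γ : ℝ) : Set (ℝ × ℝ) := {p | fderiv ℝ (V2 γ) p = 0}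

/-!
In the Fourier variables `x = Fpt y₀ y₁`, half the sum and half the difference of the two
gradient equations become `y₀ (y₀² + 3y₁² - 1) = 0` and `y₁ (y₁² + 3y₀² - μ) = 0` with
`μ = 1 - 2γ`. Their solutions are the three points `(0, 0), (±1, 0)`, the points `(0, y₁)` with
`y₁² = μ`, and the points with `8y₀² = 3μ - 1`, `8y₁² = 3 - μ`; for `μ ∉ {0, 1/3}` these three
families are disjoint, so counting real square roots of `μ` and `(3μ - 1)/8` gives 3, 5 or 9.
-/

open ContinuousLinearMap in
theorem smul_fst_add_smul_snd_eq_zero_iff {𝕜 : Type*} [NontriviallyNormedField 𝕜] (a b : 𝕜) :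
    a • fst 𝕜 𝕜 𝕜 + b • snd 𝕜 𝕜 𝕜 = 0 ↔ a = 0 ∧ b = 0 := by
  refine ⟨fun h => ⟨?_, ?_⟩, by rintro ⟨rfl, rfl⟩; ext <;> simp⟩
  · simpa using DFunLike.congr_fun h (1, 0)
  · simpa using DFunLike.congr_fun h (0, 1)

open ContinuousLinearMap in
theorem hasFDerivAt_V2 (γ : ℝ) (p : ℝ × ℝ) :
    HasFDerivAt (V2 γ)
      ((p.1 ^ 3 - p.1 + γ * (p.1 - p.2)) • fst ℝ ℝ ℝ
        + (p.2 ^ 3 - p.2 - γ * (p.1 - p.2)) • snd ℝ ℝ ℝ) p := by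
  have hW : ∀ t : ℝ, HasDerivAt (fun s : ℝ => s ^ 4 / 4 - s ^ 2 / 2) (t ^ 3 - t) t := fun t =>
    (((hasDerivAt_pow 4 t).div_const 4).sub ((hasDerivAt_pow 2 t).div_const 2)).congr_deriv
      (by ring)
  have hC : HasDerivAt (fun s : ℝ => γ / 2 * s ^ 2) (γ * (p.1 - p.2)) (p.1 - p.2) :=
    ((hasDerivAt_pow 2 (p.1 - p.2)).const_mul (γ / 2)).congr_deriv (by ring)
  have hV := ((hW p.1).comp_hasFDerivAt p hasFDerivAt_fst).add
    ((hW p.2).comp_hasFDerivAt p hasFDerivAt_snd) |>.add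
    (hC.comp_hasFDerivAt (h₂ := fun s => γ / 2 * s ^ 2) p
      (hasFDerivAt_fst.sub (hasFDerivAt_snd (𝕜 := ℝ) (p := p))))
  refine hV.congr_fderiv ?_
  ext <;> simp; ring

theorem mem_S2_iff (γ : ℝ) (p : ℝ × ℝ) :
    p ∈ S2 γ ↔ p.1 ^ 3 - p.1 + γ * (p.1 - p.2) = 0 ∧ p.2 ^ 3 - p.2 - γ * (p.1 - p.2) = 0 := by
  rw [S2, Set.mem_ofPred_eq, (hasFDerivAt_V2 γ p).fderiv, smul_fst_add_smul_snd_eq_zero_iff]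

def fourierStationary (μ : ℝ) : Set (ℝ × ℝ) :=
  {y | y.1 * (y.1 ^ 2 + 3 * y.2 ^ 2 - 1) = 0 ∧ y.2 * (y.2 ^ 2 + 3 * y.1 ^ 2 - μ) = 0}

theorem Fpt_mem_S2_iff (γ y₀ y₁ : ℝ) :
    Fpt y₀ y₁ ∈ S2 γ ↔ (y₀, y₁) ∈ fourierStationary (1 - 2 * γ) := by
  simp only [mem_S2_iff, Fpt, fourierStationary, Set.mem_ofPred_eq]
  constructor
  · rintro ⟨h₁, h₂⟩
    exact ⟨by linear_combination (h₁ + h₂) / 2, by linear_combination (h₂ - h₁) / 2⟩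
  · rintro ⟨h₀, h₁⟩
    exact ⟨by linear_combination h₀ - h₁, by linear_combination h₀ + h₁⟩

theorem Fpt_injective : Function.Injective (fun y : ℝ × ℝ => Fpt y.1 y.2) := by
  rintro ⟨a, b⟩ ⟨c, d⟩ h
  simp only [Fpt, Prod.mk.injEq] at h ⊢
  constructor <;> linarith

theorem S2_eq_image (γ : ℝ) :
    S2 γ = (fun y : ℝ × ℝ => Fpt y.1 y.2) '' fourierStationary (1 - 2 * γ) := by
  ext p
  refine ⟨fun hp => ⟨((p.1 + p.2) / 2, (p.2 - p.1) / 2), ?_, ?_⟩, ?_⟩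
  · rw [← Fpt_mem_S2_iff]
    convert hp using 1
    ext <;> simp only [Fpt] <;> ring
  · ext <;> simp only [Fpt] <;> ring
  · rintro ⟨⟨y₀, y₁⟩, hy, rfl⟩
    exact (Fpt_mem_S2_iff γ y₀ y₁).mpr hy

def squareRoots (c : ℝ) : Set ℝ := {x | x ^ 2 = c}

theorem squareRoots_eq_pair {c : ℝ} (hc : 0 ≤ c) : squareRoots c = {√c, -√c} := by
  ext x
  rw [squareRoots, Set.mem_ofPred_eq, ← Real.sq_sqrt hc, sq_eq_sq_iff_eq_or_eq_neg, Real.sq_sqrt hc]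
  rfl

theorem squareRoots_eq_empty {c : ℝ} (hc : c < 0) : squareRoots c = ∅ :=
  Set.eq_empty_of_forall_notMem fun x hx => by
    have : x ^ 2 = c := hx
    nlinarith [sq_nonneg x]

instance (c : ℝ) : Finite (squareRoots c) := by
  rcases lt_or_ge c 0 with hc | hc
  · rw [squareRoots_eq_empty hc]; infer_instance
  · rw [squareRoots_eq_pair hc]; infer_instance

theorem ncard_squareRoots_of_pos {c : ℝ} (hc : 0 < c) : (squareRoots c).ncard = 2 := by
  rw [squareRoots_eq_pair hc.le, Set.ncard_pair]
  have := Real.sqrt_pos.mpr hc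
  linarith

theorem ncard_squareRoots_of_neg {c : ℝ} (hc : c < 0) : (squareRoots c).ncard = 0 := by
  rw [squareRoots_eq_empty hc, Set.ncard_empty]

theorem fourierStationary_eq (μ : ℝ) :
    fourierStationary μ = {(0, 0), (1, 0), (-1, 0)} ∪ {0} ×ˢ squareRoots μ ∪
      squareRoots ((3 * μ - 1) / 8) ×ˢ squareRoots ((3 - μ) / 8) := by
  ext ⟨x, y⟩
  simp only [fourierStationary, squareRoots, Set.mem_ofPred_eq, Set.mem_union, Set.mem_prod,
    Set.mem_insert_iff, Set.mem_singleton_iff, Prod.mk.injEq]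
  constructor
  · rintro ⟨hx, hy⟩
    rcases mul_eq_zero.mp hx with rfl | hx <;> rcases mul_eq_zero.mp hy with rfl | hy
    · simp
    · exact Or.inl (Or.inr ⟨rfl, by linarith⟩)
    · have : (x - 1) * (x + 1) = 0 := by linear_combination hx
      rcases mul_eq_zero.mp this with h | h
      · exact Or.inl (Or.inl (Or.inr (Or.inl ⟨by linarith, rfl⟩)))
      · exact Or.inl (Or.inl (Or.inr (Or.inr ⟨by linarith, rfl⟩)))
    · exact Or.inr ⟨by linear_combination (3 * hy - hx) / 8, by linear_combination (3 * hx - hy) / 8⟩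
  · rintro (((⟨rfl, rfl⟩ | ⟨rfl, rfl⟩ | ⟨rfl, rfl⟩) | ⟨rfl, hy⟩) | ⟨hx, hy⟩)
    · norm_num
    · norm_num
    · norm_num
    · exact ⟨by ring, by linear_combination y * hy⟩
    · exact ⟨by linear_combination x * (hx + 3 * hy), by linear_combination y * (hy + 3 * hx)⟩

theorem ncard_fourierStationary {μ : ℝ} (hμ₀ : μ ≠ 0) (hμ₁ : μ ≠ 1 / 3) (hμ₃ : μ < 3) :
    (fourierStationary μ).ncard =
      3 + (squareRoots μ).ncard + 2 * (squareRoots ((3 * μ - 1) / 8)).ncard := by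
  have hAB : Disjoint ({(0, 0), (1, 0), (-1, 0)} : Set (ℝ × ℝ)) ({0} ×ˢ squareRoots μ) := by
    refine Set.disjoint_left.mpr ?_
    rintro ⟨x, y⟩ hA ⟨-, hy⟩
    simp only [Set.mem_insert_iff, Set.mem_singleton_iff, Prod.mk.injEq] at hA
    obtain ⟨-, rfl⟩ | ⟨-, rfl⟩ | ⟨-, rfl⟩ := hA <;> exact hμ₀ (by simpa [squareRoots] using hy.symm)
  have hABC : Disjoint ({(0, 0), (1, 0), (-1, 0)} ∪ {0} ×ˢ squareRoots μ)
      (squareRoots ((3 * μ - 1) / 8) ×ˢ squareRoots ((3 - μ) / 8)) := by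
    refine Set.disjoint_right.mpr ?_
    rintro ⟨x, y⟩ ⟨hx, hy⟩ hAB
    have hx : x ^ 2 = (3 * μ - 1) / 8 := hx
    have hy : y ^ 2 = (3 - μ) / 8 := hy
    simp only [Set.mem_union, Set.mem_insert_iff, Set.mem_singleton_iff, Prod.mk.injEq,
      Set.mem_prod] at hAB
    rcases hAB with (⟨-, rfl⟩ | ⟨-, rfl⟩ | ⟨-, rfl⟩) | ⟨rfl, -⟩
    all_goals first | linarith | exact hμ₁ (by linarith)
  have hA : ({(0, 0), (1, 0), (-1, 0)} : Set (ℝ × ℝ)).ncard = 3 :=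
    Set.ncard_eq_three.mpr ⟨_, _, _, by simp, by simp, by norm_num, rfl⟩
  rw [fourierStationary_eq, Set.ncard_union_eq hABC, Set.ncard_union_eq hAB, hA,
    Set.ncard_prod, Set.ncard_prod, Set.ncard_singleton,
    ncard_squareRoots_of_pos (show 0 < (3 - μ) / 8 by linarith)]
  ring

theorem neg_mem_squareRoots {c x : ℝ} : -x ∈ squareRoots c ↔ x ∈ squareRoots c := by
  simp only [squareRoots, Set.mem_ofPred_eq, neg_sq]

theorem sqrt_mem_squareRoots {c : ℝ} (hc : 0 ≤ c) : √c ∈ squareRoots c :=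
  Real.sq_sqrt hc

theorem ncard_S2 {γ : ℝ} (hγ : 0 < γ) (hγ₁ : γ ≠ 1 / 2) (hγ₂ : γ ≠ 1 / 3) :
    (S2 γ).ncard = 3 + (squareRoots (1 - 2 * γ)).ncard +
      2 * (squareRoots ((3 * (1 - 2 * γ) - 1) / 8)).ncard := by
  rw [S2_eq_image, Set.ncard_image_of_injective _ Fpt_injective]
  exact ncard_fourierStationary (by contrapose! hγ₁; linarith) (by contrapose! hγ₂; linarith)
    (by linarith)

/-- description of the stationary points of `V_γ` for `N = 2` in Fourier
variables, and the counts 3, 5, 9 of stationary points in the respective regimes. -/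
theorem stmt12 (γ : ℝ) (hγ : 0 < γ) :
    (0, 0) ∈ S2 γ ∧
    Fpt 1 0 ∈ S2 γ ∧ Fpt (-1) 0 ∈ S2 γ ∧
    ((∃ y₁ : ℝ, 0 < y₁ ∧ y₁ ^ 2 = 1 - 2 * γ ∧
        Fpt 0 y₁ ∈ S2 γ ∧ Fpt 0 (-y₁) ∈ S2 γ) ↔ γ < 1 / 2) ∧
    ((∃ y₀ y₁ : ℝ, 0 < y₀ ∧ 0 < y₁ ∧
        8 * y₀ ^ 2 = 3 * (1 - 2 * γ) - 1 ∧ 8 * y₁ ^ 2 = 3 - (1 - 2 * γ) ∧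
        Fpt y₀ y₁ ∈ S2 γ ∧ Fpt y₀ (-y₁) ∈ S2 γ ∧
        Fpt (-y₀) y₁ ∈ S2 γ ∧ Fpt (-y₀) (-y₁) ∈ S2 γ) ↔ γ < 1 / 3) ∧
    (1 / 2 < γ → (S2 γ).ncard = 3) ∧
    (1 / 3 < γ → γ < 1 / 2 → (S2 γ).ncard = 5) ∧
    (γ < 1 / 3 → (S2 γ).ncard = 9) := by
  simp only [Fpt_mem_S2_iff, fourierStationary_eq, Set.mem_union, Set.mem_prod,
    neg_mem_squareRoots]
  refine ⟨by simp [mem_S2_iff], by simp, by simp, ⟨?_, fun h => ?_⟩, ⟨?_, fun h => ?_⟩,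
    fun h => ?_, fun h h' => ?_, fun h => ?_⟩
  · rintro ⟨y₁, hy₁, hsq, -⟩
    nlinarith
  · have hroot := sqrt_mem_squareRoots (c := 1 - 2 * γ) (by linarith)
    exact ⟨_, Real.sqrt_pos.mpr (by linarith), hroot, .inl (.inr ⟨rfl, hroot⟩),
      .inl (.inr ⟨rfl, hroot⟩)⟩
  · rintro ⟨y₀, y₁, hy₀, -, hsq, -⟩
    nlinarith
  · have hroot₀ := sqrt_mem_squareRoots (c := (3 * (1 - 2 * γ) - 1) / 8) (by linarith)
    have hroot₁ := sqrt_mem_squareRoots (c := (3 - (1 - 2 * γ)) / 8) (by linarith)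
    exact ⟨_, _, Real.sqrt_pos.mpr (by linarith), Real.sqrt_pos.mpr (by linarith),
      by linarith [hroot₀.out], by linarith [hroot₁.out], .inr ⟨hroot₀, hroot₁⟩,
      .inr ⟨hroot₀, hroot₁⟩, .inr ⟨hroot₀, hroot₁⟩, .inr ⟨hroot₀, hroot₁⟩⟩
  · rw [ncard_S2 hγ (by linarith) (by linarith), ncard_squareRoots_of_neg (by linarith),
      ncard_squareRoots_of_neg (by linarith)]
  · rw [ncard_S2 hγ (by linarith) (by linarith), ncard_squareRoots_of_pos (by linarith),
      ncard_squareRoots_of_neg (by linarith)]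
  · rw [ncard_S2 hγ (by linarith) (by linarith), ncard_squareRoots_of_pos (by linarith),
      ncard_squareRoots_of_pos (by linarith)]
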